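/- Let π be an indecomposable 132-avoiding permutation and let λ = Λ(π) be the partition given by its Lehmer code (with the convention λ_i = 0 for indices beyond the number of parts). Then π avoids the pattern 3412 if and only if there do not exist indices i < j with λ_i = λ_{i+1} > 0 and λ_j − λ_{j+1} ≥ 2. -/
import Mathlib


/-- A permutation `π` of length `n` (as a bijection of `Fin n`, position `i` has value `π i`)
contains the pattern `p` of length `m` if some subsequence of `π` is order-isomorphic to `p`. -/
def Contains {n m : ℕ} (π : Equiv.Perm (Fin n)) (p : Equiv.Perm (Fin m)) : Prop :=
  ∃ f : Fin m → Fin n, StrictMono f ∧ ∀ a b : Fin m, π (f a) < π (f b) ↔ p a < p b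

/-- `π` avoids the pattern `p`. -/
def Avoids {n m : ℕ} (π : Equiv.Perm (Fin n)) (p : Equiv.Perm (Fin m)) : Prop :=
  ¬ Contains π p

/-- The number of inversions of `π`: pairs of positions `i < j` with `π i > π j`. -/
noncomputable def invCount {n : ℕ} (π : Equiv.Perm (Fin n)) : ℕ :=
  Nat.card {ij : Fin n × Fin n // ij.1 < ij.2 ∧ π ij.2 < π ij.1}

/-- The pattern 132. -/
def p132 : Equiv.Perm (Fin 3) := ⟨![0,2,1], ![0,2,1], by decide, by decide⟩

/-- `π` is indecomposable: it is not the direct sum of two nonempty permutations,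
i.e. there is no `0 < d < n` such that the first `d` positions carry the values `0, …, d-1`. -/
def Indecomposable {n : ℕ} (π : Equiv.Perm (Fin n)) : Prop :=
  ¬ ∃ d : ℕ, 0 < d ∧ d < n ∧ ∀ i : Fin n, (i : ℕ) < d → (π i : ℕ) < d

/-- The Lehmer code of `π` at position `i`: the number of positions `j > i` with
`π j < π i`.  For an indecomposable `132`-avoiding permutation the Lehmer code is
weakly decreasing and its nonzero entries form the partition `Λ(π)` of `inv(π)`. -/
noncomputable def lehmer {n : ℕ} (π : Equiv.Perm (Fin n)) (i : Fin n) : ℕ :=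
  Nat.card {j : Fin n // i < j ∧ π j < π i}

/-- The Lehmer code of `π`, extended by zeroes beyond position `n`; for an indecomposable
`132`-avoider this is exactly the partition `λ = Λ(π)` with the convention `λ_i = 0` for
indices `i` beyond the number of parts (indices are 0-based here). -/
noncomputable def lehmerExt {n : ℕ} (π : Equiv.Perm (Fin n)) (i : ℕ) : ℕ :=
  if h : i < n then lehmer π ⟨i, h⟩ else 0

def p3412 : Equiv.Perm (Fin 4) := ⟨![2,3,0,1], ![2,3,0,1], by decide, by decide⟩

namespace Aux

lemma strictMono_vec3 {α : Type*} [Preorder α] {a b c : α} (h1 : a < b) (h2 : b < c) :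
    StrictMono ![a, b, c] := by
  intro x y hxy
  fin_cases x <;> fin_cases y <;>
    first
    | exact absurd hxy (by decide)
    | exact h1
    | exact h2
    | exact h1.trans h2

lemma strictMono_vec4 {α : Type*} [Preorder α] {a b c d : α}
    (h1 : a < b) (h2 : b < c) (h3 : c < d) : StrictMono ![a, b, c, d] := by
  intro x y hxy
  fin_cases x <;> fin_cases y <;>
    first
    | exact absurd hxy (by decide)
    | exact h1
    | exact h2
    | exact h3
    | exact h1.trans h2
    | exact h2.trans h3
    | exact (h1.trans h2).trans h3

variable {n : ℕ} (π : Equiv.Perm (Fin n))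

def Sfin (i : Fin n) : Finset (Fin n) :=
  Finset.univ.filter (fun j => i < j ∧ π j < π i)

lemma lehmer_eq_card (i : Fin n) : lehmer π i = (Sfin π i).card := by
  rw [lehmer, Nat.card_eq_fintype_card, Sfin, Fintype.card_subtype]

lemma lehmer_le_val (i : Fin n) : lehmer π i ≤ (π i : ℕ) := by
  rw [lehmer_eq_card]
  have h1 : (Sfin π i).image π ⊆ Finset.Iio (π i) := by
    intro v hv
    simp only [Finset.mem_image] at hv
    obtain ⟨k, hk, rfl⟩ := hv
    simp only [Sfin, Finset.mem_filter] at hk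
    exact Finset.mem_Iio.2 hk.2.2
  have h2 := Finset.card_le_card h1
  rwa [Finset.card_image_of_injective _ π.injective, Fin.card_Iio] at h2

lemma contains132_of {k i j : Fin n} (hki : k < i) (hij : i < j)
    (h1 : π k < π j) (h2 : π j < π i) : Contains π p132 := by
  have h3 : π k < π i := h1.trans h2
  refine ⟨![k, i, j], strictMono_vec3 hki hij, ?_⟩
  intro a b
  fin_cases a <;> fin_cases b <;>
    first
    | exact iff_of_false (lt_irrefl _) (by decide)
    | exact iff_of_true (by assumption) (by decide)
    | exact iff_of_false (lt_asymm (by assumption)) (by decide)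

lemma contains3412_of {a b c d : Fin n} (hab : a < b) (hbc : b < c) (hcd : c < d)
    (h1 : π c < π d) (h2 : π d < π a) (h3 : π a < π b) : Contains π p3412 := by
  have h4 : π c < π a := h1.trans h2
  have h5 : π d < π b := h2.trans h3
  have h6 : π c < π b := h4.trans h3
  refine ⟨![a, b, c, d], strictMono_vec4 hab hbc hcd, ?_⟩
  intro x y
  fin_cases x <;> fin_cases y <;>
    first
    | exact iff_of_false (lt_irrefl _) (by decide)
    | exact iff_of_true (by assumption) (by decide)
    | exact iff_of_false (lt_asymm (by assumption)) (by decide)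

/-- L0: in a 132-avoider, values after `i` below `π i` are all `< lehmer π i`. -/
lemma val_lt_lehmer (h132 : Avoids π p132) {i j : Fin n} (hij : i < j)
    (hv : π j < π i) : (π j : ℕ) < lehmer π i := by
  by_contra hcon
  push_neg at hcon
  by_cases hall : ∀ v : Fin n, v ≤ π j → i < π.symm v
  · have hsub : (Finset.Iic (π j)).image π.symm ⊆ Sfin π i := by
      intro k hk
      simp only [Finset.mem_image, Finset.mem_Iic] at hk
      obtain ⟨v, hv1, rfl⟩ := hk
      simp only [Sfin, Finset.mem_filter, Finset.mem_univ, true_and]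
      refine ⟨hall v hv1, ?_⟩
      rw [Equiv.apply_symm_apply]
      exact lt_of_le_of_lt hv1 hv
    have hc := Finset.card_le_card hsub
    rw [Finset.card_image_of_injective _ π.symm.injective, Fin.card_Iic,
      ← lehmer_eq_card] at hc
    omega
  · push_neg at hall
    obtain ⟨v, hv1, hv2⟩ := hall
    have hπk : π (π.symm v) = v := Equiv.apply_symm_apply _ _
    have hkj : v ≠ π j := by
      intro h
      have hkj' : π.symm v = j := by rw [h, Equiv.symm_apply_apply]
      rw [hkj'] at hv2
      exact absurd (hv2.trans_lt hij) (lt_irrefl j)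
    have hvj : v < π j := lt_of_le_of_ne hv1 hkj
    have hki : π.symm v < i := by
      rcases lt_or_eq_of_le hv2 with h | h
      · exact h
      · exfalso
        rw [h] at hπk
        rw [← hπk] at hvj
        exact absurd (hvj.trans hv) (lt_irrefl _)
    exact h132 (contains132_of π hki hij (by rw [hπk]; exact hvj) hv)

/-- L0': every value `< lehmer π j` occurs after `j` (and is below `π j`). -/
lemma exists_pos_of_lt_lehmer (h132 : Avoids π p132) {j : Fin n} {w : ℕ}
    (hw : w < lehmer π j) : ∃ q : Fin n, j < q ∧ (π q : ℕ) = w ∧ π q < π j := by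
  have hwn : w < n := lt_of_lt_of_le hw (le_trans (lehmer_le_val π j) (le_of_lt (π j).isLt))
  have hln : lehmer π j < n := lt_of_le_of_lt (lehmer_le_val π j) (π j).isLt
  have hsub : (Sfin π j).image π ⊆ Finset.univ.filter (fun v : Fin n => (v : ℕ) < lehmer π j) := by
    intro v hv
    simp only [Finset.mem_image] at hv
    obtain ⟨k, hk, rfl⟩ := hv
    simp only [Sfin, Finset.mem_filter, Finset.mem_univ, true_and] at hk ⊢
    exact val_lt_lehmer π h132 hk.1 hk.2
  have hcard1 : ((Sfin π j).image π).card = lehmer π j := by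
    rw [Finset.card_image_of_injective _ π.injective, lehmer_eq_card]
  have hcard2 : (Finset.univ.filter (fun v : Fin n => (v : ℕ) < lehmer π j)).card ≤ lehmer π j := by
    have hs : (Finset.univ.filter (fun v : Fin n => (v : ℕ) < lehmer π j))
        ⊆ Finset.Iio (⟨lehmer π j, hln⟩ : Fin n) := by
      intro v hv
      simp only [Finset.mem_filter] at hv
      exact Finset.mem_Iio.2 hv.2
    have := Finset.card_le_card hs
    rwa [Fin.card_Iio] at this
  have heq : (Sfin π j).image π = Finset.univ.filter (fun v : Fin n => (v : ℕ) < lehmer π j) :=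
    Finset.eq_of_subset_of_card_le hsub (by omega)
  have hmem : (⟨w, hwn⟩ : Fin n) ∈ (Sfin π j).image π := by
    rw [heq]; simp [hw]
  simp only [Finset.mem_image] at hmem
  obtain ⟨q, hq, hqe⟩ := hmem
  simp only [Sfin, Finset.mem_filter, Finset.mem_univ, true_and] at hq
  exact ⟨q, hq.1, by rw [hqe], hq.2⟩

/-- ascent: `lehmer` stays equal. -/
lemma ascent_eq (h132 : Avoids π p132) {i : ℕ} (hi : i < n) (h1 : i + 1 < n)
    (ha : π ⟨i, hi⟩ < π ⟨i + 1, h1⟩) :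
    lehmer π ⟨i, hi⟩ = lehmer π ⟨i + 1, h1⟩ := by
  have hi01 : (⟨i, hi⟩ : Fin n) < ⟨i + 1, h1⟩ := by
    show i < i + 1; omega
  rw [lehmer_eq_card, lehmer_eq_card]
  congr 1
  apply Finset.Subset.antisymm
  · intro k hk
    simp only [Sfin, Finset.mem_filter, Finset.mem_univ, true_and] at hk ⊢
    obtain ⟨hk1, hk2⟩ := hk
    have hki1 : k ≠ ⟨i + 1, h1⟩ := by
      intro h; rw [h] at hk2; exact absurd (ha.trans hk2) (lt_irrefl _)
    have hk1' : i < (k : ℕ) := hk1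
    have hlt : (⟨i + 1, h1⟩ : Fin n) < k := by
      show i + 1 < (k : ℕ)
      have : (k : ℕ) ≠ i + 1 := fun h => hki1 (Fin.ext h)
      omega
    exact ⟨hlt, hk2.trans ha⟩
  · intro k hk
    simp only [Sfin, Finset.mem_filter, Finset.mem_univ, true_and] at hk ⊢
    obtain ⟨hk1, hk2⟩ := hk
    refine ⟨hi01.trans hk1, ?_⟩
    by_contra hcon
    push_neg at hcon
    have hne : π ⟨i, hi⟩ ≠ π k := by
      intro h
      have h' : (⟨i, hi⟩ : Fin n) = k := π.injective h
      rw [h'] at hi01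
      exact absurd (hi01.trans hk1) (lt_irrefl _)
    have hlt : π ⟨i, hi⟩ < π k := lt_of_le_of_ne hcon hne
    exact h132 (contains132_of π hi01 hk1 hlt hk2)

/-- descent: `lehmer` strictly decreases. -/
lemma descent_lt (h132 : Avoids π p132) {i : ℕ} (hi : i < n) (h1 : i + 1 < n)
    (hd : π ⟨i + 1, h1⟩ < π ⟨i, hi⟩) :
    lehmer π ⟨i + 1, h1⟩ < lehmer π ⟨i, hi⟩ := by
  have h2 : (π ⟨i + 1, h1⟩ : ℕ) < lehmer π ⟨i, hi⟩ :=
    val_lt_lehmer π h132 (show i < i + 1 by omega) hd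
  exact lt_of_le_of_lt (lehmer_le_val π _) h2

lemma step_le (h132 : Avoids π p132) {i : ℕ} (hi : i < n) (h1 : i + 1 < n) :
    lehmer π ⟨i + 1, h1⟩ ≤ lehmer π ⟨i, hi⟩ := by
  rcases lt_trichotomy (π ⟨i + 1, h1⟩) (π ⟨i, hi⟩) with h | h | h
  · exact le_of_lt (descent_lt π h132 hi h1 h)
  · exfalso
    have h' : (⟨i + 1, h1⟩ : Fin n) = ⟨i, hi⟩ := π.injective h
    have : i + 1 = i := congrArg Fin.val h'
    omega
  · exact le_of_eq (ascent_eq π h132 hi h1 h).symm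

lemma lehmer_anti (h132 : Avoids π p132) {i j : ℕ} (hij : i ≤ j) (hi : i < n) (hj : j < n) :
    lehmer π ⟨j, hj⟩ ≤ lehmer π ⟨i, hi⟩ := by
  induction j with
  | zero =>
    have h0 : i = 0 := by omega
    subst h0
    exact le_of_eq rfl
  | succ m ih =>
    rcases Nat.lt_or_ge i (m + 1) with h | h
    · exact le_trans (step_le π h132 (by omega) hj) (ih (by omega) (by omega))
    · have h0 : i = m + 1 := by omega
      subst h0
      exact le_of_eq rfl

lemma lehmer_last (h0 : 0 < n) (h : n - 1 < n) : lehmer π ⟨n - 1, h⟩ = 0 := by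
  rw [lehmer_eq_card]
  rw [Finset.card_eq_zero, Finset.eq_empty_iff_forall_notMem]
  intro k hk
  simp only [Sfin, Finset.mem_filter, Finset.mem_univ, true_and] at hk
  have h1 : (n : ℕ) - 1 < (k : ℕ) := hk.1
  have h2 : (k : ℕ) < n := k.isLt
  omega

lemma contains_of_witness (h132 : Avoids π p132) {i j : ℕ} (hij : i < j)
    (heq : lehmerExt π i = lehmerExt π (i + 1)) (hpos : 0 < lehmerExt π i)
    (hdrop : lehmerExt π (j + 1) + 2 ≤ lehmerExt π j) : Contains π p3412 := by
  -- i + 1 < n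
  have hi1 : i + 1 < n := by
    by_contra h
    have h2 : lehmerExt π (i + 1) = 0 := dif_neg h
    rw [heq, h2] at hpos
    exact absurd hpos (lt_irrefl 0)
  have hin : i < n := by omega
  -- j < n
  have hjn : j < n := by
    by_contra h
    have h2 : lehmerExt π j = 0 := dif_neg h
    omega
  -- j + 1 < n
  have hj1 : j + 1 < n := by
    by_contra h
    have h2 : lehmerExt π (j + 1) = 0 := dif_neg h
    have h3 : j = n - 1 := by omega
    have h4 : lehmerExt π j = 0 := by
      have h5 : lehmerExt π j = lehmer π ⟨j, hjn⟩ := dif_pos hjn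
      rw [h5]
      have h6 : (⟨j, hjn⟩ : Fin n) = ⟨n - 1, by omega⟩ := Fin.ext (show j = n - 1 by omega)
      rw [h6]
      exact lehmer_last π (by omega) (by omega)
    omega
  have ei : lehmerExt π i = lehmer π ⟨i, hin⟩ := dif_pos hin
  have ei1 : lehmerExt π (i + 1) = lehmer π ⟨i + 1, hi1⟩ := dif_pos hi1
  have ej : lehmerExt π j = lehmer π ⟨j, hjn⟩ := dif_pos hjn
  have ej1 : lehmerExt π (j + 1) = lehmer π ⟨j + 1, hj1⟩ := dif_pos hj1
  rw [ei, ei1] at heq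
  rw [ei] at hpos
  rw [ej, ej1] at hdrop
  -- ascent at i
  have hasc : π ⟨i, hin⟩ < π ⟨i + 1, hi1⟩ := by
    rcases lt_trichotomy (π ⟨i, hin⟩) (π ⟨i + 1, hi1⟩) with h | h | h
    · exact h
    · exfalso
      have h' : (⟨i, hin⟩ : Fin n) = ⟨i + 1, hi1⟩ := π.injective h
      have : i = i + 1 := congrArg Fin.val h'
      omega
    · have := descent_lt π h132 hin hi1 h
      omega
  -- descent at j
  have hdesc : π ⟨j + 1, hj1⟩ < π ⟨j, hjn⟩ := by
    rcases lt_trichotomy (π ⟨j + 1, hj1⟩) (π ⟨j, hjn⟩) with h | h | h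
    · exact h
    · exfalso
      have h' : (⟨j + 1, hj1⟩ : Fin n) = ⟨j, hjn⟩ := π.injective h
      have : j + 1 = j := congrArg Fin.val h'
      omega
    · have := ascent_eq π h132 hjn hj1 h
      omega
  have hπJ1 : (π ⟨j + 1, hj1⟩ : ℕ) < lehmer π ⟨j, hjn⟩ :=
    val_lt_lehmer π h132 (show j < j + 1 by omega) hdesc
  have hbJ1 : lehmer π ⟨j + 1, hj1⟩ ≤ (π ⟨j + 1, hj1⟩ : ℕ) := lehmer_le_val π _
  -- pick the auxiliary value w
  obtain ⟨w, hwlt, hwge, hwne⟩ : ∃ w : ℕ, w < lehmer π ⟨j, hjn⟩ ∧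
      lehmer π ⟨j + 1, hj1⟩ ≤ w ∧ w ≠ (π ⟨j + 1, hj1⟩ : ℕ) := by
    by_cases h : (π ⟨j + 1, hj1⟩ : ℕ) = lehmer π ⟨j + 1, hj1⟩
    · exact ⟨lehmer π ⟨j + 1, hj1⟩ + 1, by omega, by omega, by omega⟩
    · exact ⟨lehmer π ⟨j + 1, hj1⟩, by omega, by omega, by omega⟩
  obtain ⟨q, hqJ, hqval, hqlt⟩ := exists_pos_of_lt_lehmer π h132 hwlt
  have hqJ' : j < (q : ℕ) := hqJ
  have hqne : (q : ℕ) ≠ j + 1 := by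
    intro h
    have hq' : q = ⟨j + 1, hj1⟩ := Fin.ext h
    rw [hq'] at hqval
    exact hwne hqval.symm
  have hq2 : j + 1 < (q : ℕ) := by omega
  have hJ1q : π ⟨j + 1, hj1⟩ < π q := by
    rcases lt_trichotomy (π ⟨j + 1, hj1⟩) (π q) with h | h | h
    · exact h
    · exfalso
      have h' : (⟨j + 1, hj1⟩ : Fin n) = q := π.injective h
      exact hqne (congrArg Fin.val h').symm
    · exfalso
      have := val_lt_lehmer π h132 (show (⟨j + 1, hj1⟩ : Fin n) < q from hq2) h
      omega
  have hanti : lehmer π ⟨j, hjn⟩ ≤ lehmer π ⟨i + 1, hi1⟩ :=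
    lehmer_anti π h132 (show i + 1 ≤ j by omega) hi1 hjn
  have hIle : lehmer π ⟨i, hin⟩ ≤ (π ⟨i, hin⟩ : ℕ) := lehmer_le_val π _
  have hqI : π q < π ⟨i, hin⟩ := by
    rw [Fin.lt_def]
    omega
  exact contains3412_of π
    (Fin.mk_lt_mk.mpr (by omega))
    (Fin.mk_lt_mk.mpr (by omega))
    (show (⟨j + 1, hj1⟩ : Fin n) < q from by rw [Fin.lt_def]; exact hq2)
    hJ1q hqI hasc

lemma witness_of_contains (h132 : Avoids π p132) (hc : Contains π p3412) :
    ∃ i j : ℕ, i < j ∧ lehmerExt π i = lehmerExt π (i + 1) ∧ 0 < lehmerExt π i ∧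
      lehmerExt π (j + 1) + 2 ≤ lehmerExt π j := by
  obtain ⟨f, hf, hiff⟩ := hc
  set a := f 0 with hadef
  set b := f 1 with hbdef
  set c := f 2 with hcdef
  set d := f 3 with hddef
  have hab : a < b := hf (show (0 : Fin 4) < 1 by decide)
  have hbc : b < c := hf (show (1 : Fin 4) < 2 by decide)
  have hcd : c < d := hf (show (2 : Fin 4) < 3 by decide)
  have hvcd : π c < π d := (hiff 2 3).mpr (by decide)
  have hvda : π d < π a := (hiff 3 0).mpr (by decide)
  have hvab : π a < π b := (hiff 0 1).mpr (by decide)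
  -- maximum position on [a, b]
  obtain ⟨M, hM1, hM2⟩ := Finset.exists_max_image (Finset.Icc a b) π
    ⟨a, Finset.mem_Icc.2 ⟨le_refl a, le_of_lt hab⟩⟩
  rw [Finset.mem_Icc] at hM1
  have hbM : π b ≤ π M := hM2 b (Finset.mem_Icc.2 ⟨le_of_lt hab, le_refl b⟩)
  have haM : π a < π M := lt_of_lt_of_le hvab hbM
  have haMlt : a < M := by
    rcases lt_or_eq_of_le hM1.1 with h | h
    · exact h
    · exfalso; rw [← h] at haM; exact absurd haM (lt_irrefl _)
  have hMpos : 1 ≤ (M : ℕ) := by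
    have : (a : ℕ) < (M : ℕ) := haMlt
    omega
  have hMn : (M : ℕ) < n := M.isLt
  have hMmn : (M : ℕ) - 1 < n := by omega
  have hM1n : (M : ℕ) - 1 + 1 < n := by omega
  have hMeq : (⟨(M : ℕ) - 1 + 1, hM1n⟩ : Fin n) = M :=
    Fin.ext (show (M : ℕ) - 1 + 1 = (M : ℕ) by omega)
  have hMmIcc : (⟨(M : ℕ) - 1, hMmn⟩ : Fin n) ∈ Finset.Icc a b := by
    rw [Finset.mem_Icc]
    have ha' : (a : ℕ) < (M : ℕ) := haMlt
    have hb' : (M : ℕ) ≤ (b : ℕ) := hM1.2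
    constructor
    · show (a : ℕ) ≤ (M : ℕ) - 1
      omega
    · show ((M : ℕ) - 1 : ℕ) ≤ (b : ℕ)
      omega
  have hMasc : π ⟨(M : ℕ) - 1, hMmn⟩ < π M := by
    rcases lt_or_eq_of_le (hM2 _ hMmIcc) with h | h
    · exact h
    · exfalso
      have h' : (⟨(M : ℕ) - 1, hMmn⟩ : Fin n) = M := π.injective h
      have hv : ((M : ℕ) - 1 : ℕ) = (M : ℕ) := congrArg Fin.val h'
      omega
  have hMasc' : π ⟨(M : ℕ) - 1, hMmn⟩ < π ⟨(M : ℕ) - 1 + 1, hM1n⟩ := by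
    rw [hMeq]; exact hMasc
  have heqMm : lehmer π ⟨(M : ℕ) - 1, hMmn⟩ = lehmer π M := by
    have h1 := ascent_eq π h132 hMmn hM1n hMasc'
    rw [hMeq] at h1
    exact h1
  -- lehmer π M > 0
  have hMc : M < c := lt_of_le_of_lt hM1.2 hbc
  have hvcM : π c < π M := lt_of_lt_of_le ((hvcd.trans hvda).trans hvab) hbM
  have hMpos' : 0 < lehmer π M := by
    rw [lehmer_eq_card]
    apply Finset.card_pos.2
    refine ⟨c, ?_⟩
    simp only [Sfin, Finset.mem_filter, Finset.mem_univ, true_and]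
    exact ⟨hMc, hvcM⟩
  -- the big-drop position
  obtain ⟨J, hJT, hJmax⟩ := Finset.exists_max_image
    (Finset.univ.filter (fun s : Fin n => M ≤ s ∧ s < c ∧ π d < π s)) (fun s => (s : ℕ))
    ⟨M, by
      simp only [Finset.mem_filter, Finset.mem_univ, true_and]
      exact ⟨le_refl M, hMc, hvda.trans haM⟩⟩
  simp only [Finset.mem_filter, Finset.mem_univ, true_and] at hJT
  obtain ⟨hMJ, hJc, hdJ⟩ := hJT
  have hJn : (J : ℕ) < n := J.isLt
  have hJc' : (J : ℕ) < (c : ℕ) := hJc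
  have hcn : (c : ℕ) < n := c.isLt
  have hJ1n : (J : ℕ) + 1 < n := by omega
  have hvJ1d : π ⟨(J : ℕ) + 1, hJ1n⟩ < π d := by
    rcases Nat.lt_or_ge ((J : ℕ) + 1) (c : ℕ) with h | h
    · -- J+1 < c : not in the filtered set by maximality of J
      have hJ1T : (⟨(J : ℕ) + 1, hJ1n⟩ : Fin n)
          ∉ Finset.univ.filter (fun s : Fin n => M ≤ s ∧ s < c ∧ π d < π s) := by
        intro hmem
        have := hJmax _ hmem
        simp only at this
        omega
      simp only [Finset.mem_filter, Finset.mem_univ, true_and] at hJ1T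
      push_neg at hJ1T
      have hMJ1 : M ≤ (⟨(J : ℕ) + 1, hJ1n⟩ : Fin n) := by
        have hMJ' : (M : ℕ) ≤ (J : ℕ) := hMJ
        show (M : ℕ) ≤ (J : ℕ) + 1
        omega
      have hnd : π ⟨(J : ℕ) + 1, hJ1n⟩ ≤ π d := hJ1T hMJ1 h
      have hne : π ⟨(J : ℕ) + 1, hJ1n⟩ ≠ π d := by
        intro hc'
        have h' : (⟨(J : ℕ) + 1, hJ1n⟩ : Fin n) = d := π.injective hc'
        have h1 : ((J : ℕ) + 1 : ℕ) = (d : ℕ) := congrArg Fin.val h'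
        have h2 : (c : ℕ) < (d : ℕ) := hcd
        omega
      exact lt_of_le_of_ne hnd hne
    · have hJ1c : (⟨(J : ℕ) + 1, hJ1n⟩ : Fin n) = c := Fin.ext (show (J : ℕ) + 1 = (c : ℕ) by omega)
      rw [hJ1c]; exact hvcd
  have hJd : J < d := lt_trans hJc hcd
  have hπdJ : (π d : ℕ) < lehmer π J := val_lt_lehmer π h132 hJd hdJ
  have hbJ1 : lehmer π ⟨(J : ℕ) + 1, hJ1n⟩ ≤ (π ⟨(J : ℕ) + 1, hJ1n⟩ : ℕ) := lehmer_le_val π _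
  have hvJ1d' : (π ⟨(J : ℕ) + 1, hJ1n⟩ : ℕ) < (π d : ℕ) := hvJ1d
  have hdropJ : lehmer π ⟨(J : ℕ) + 1, hJ1n⟩ + 2 ≤ lehmer π J := by omega
  -- assemble witness
  have hMJ' : (M : ℕ) ≤ (J : ℕ) := hMJ
  refine ⟨(M : ℕ) - 1, (J : ℕ), by omega, ?_, ?_, ?_⟩
  · have e1 : lehmerExt π ((M : ℕ) - 1) = lehmer π ⟨(M : ℕ) - 1, hMmn⟩ := dif_pos hMmn
    have e2 : lehmerExt π ((M : ℕ) - 1 + 1) = lehmer π ⟨(M : ℕ) - 1 + 1, hM1n⟩ := dif_pos hM1n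
    rw [e1, e2, hMeq, heqMm]
  · have e1 : lehmerExt π ((M : ℕ) - 1) = lehmer π ⟨(M : ℕ) - 1, hMmn⟩ := dif_pos hMmn
    rw [e1, heqMm]
    exact hMpos'
  · have e3 : lehmerExt π ((J : ℕ) + 1) = lehmer π ⟨(J : ℕ) + 1, hJ1n⟩ := dif_pos hJ1n
    have e4 : lehmerExt π (J : ℕ) = lehmer π ⟨(J : ℕ), hJn⟩ := dif_pos hJn
    have e5 : (⟨(J : ℕ), hJn⟩ : Fin n) = J := Fin.ext rfl
    rw [e3, e4, e5]
    exact hdropJ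

end Aux

/-- Let `π` be an indecomposable 132-avoiding permutation and `λ = Λ(π)` the partition
given by its Lehmer code (here `lehmerExt π`, with `λ_i = 0` beyond the parts).  Then `π`
avoids 3412 if and only if there are no indices `i < j` with `λ_i = λ_{i+1} > 0` and
`λ_j − λ_{j+1} ≥ 2`. -/
theorem avoids_3412_iff (n : ℕ) (π : Equiv.Perm (Fin n))
    (hind : Indecomposable π) (h132 : Avoids π p132) :
    Avoids π p3412 ↔
      ¬ ∃ i j : ℕ, i < j ∧ lehmerExt π i = lehmerExt π (i + 1) ∧ 0 < lehmerExt π i ∧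
        lehmerExt π (j + 1) + 2 ≤ lehmerExt π j := by
  rw [Avoids]
  apply not_congr
  constructor
  · exact Aux.witness_of_contains π h132
  · rintro ⟨i, j, hij, heq, hpos, hdrop⟩
    exact Aux.contains_of_witness π h132 hij heq hpos hdrop
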